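/- Let n ≥ 1 and let Ω ⊆ 𝕆_sⁿ be a real-connected slice-domain with Ω ∩ ℝⁿ = ∅. Then there exists I ∈ 𝕊 such that Ω ⊆ ℂ_Iⁿ. -/

import Mathlib

/-! Octonions via the Cayley–Dickson construction on the quaternions,
the n-dimensional quadratic cone, the slice topology, and slice regularity. -/

noncomputable section
open Quaternion Topology

/-- The octonions, as `ℍ × ℍ` with the (L²) Euclidean norm and
Cayley–Dickson multiplication. -/
abbrev Oct : Type := WithLp 2 (ℍ × ℍ)

namespace Oct

def c1 (p : Oct) : ℍ := (WithLp.equiv 2 (ℍ × ℍ) p).1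
def c2 (p : Oct) : ℍ := (WithLp.equiv 2 (ℍ × ℍ) p).2
def mk (a b : ℍ) : Oct := (WithLp.equiv 2 (ℍ × ℍ)).symm (a, b)

instance : One Oct := ⟨mk 1 0⟩

/-- Cayley–Dickson multiplication. -/
instance : Mul Oct :=
  ⟨fun p q => mk (c1 p * c1 q - star (c2 q) * c2 p) (c2 q * c1 p + c2 p * star (c1 q))⟩

/-- Octonionic conjugation. -/
instance : Star Oct := ⟨fun p => mk (star (c1 p)) (-(c2 p))⟩

/-- Inverse: `p⁻¹ = ‖p‖⁻² • (star p)` (so `0⁻¹ = 0`). -/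
instance : Inv Oct := ⟨fun p => (‖p‖ ^ 2)⁻¹ • star p⟩

/-- The real inner product on `𝕆 ≅ ℝ⁸`, via polarization. -/
def oinner (p q : Oct) : ℝ := (1 / 4) * (‖p + q‖ ^ 2 - ‖p - q‖ ^ 2)

/-- The sphere `𝕊` of imaginary units of the octonions. -/
def Sph : Set Oct := {I | I * I = -1}

/-- The slice complex plane `ℂ_I = ℝ + ℝ I ⊆ 𝕆`. -/
def CI (I : Oct) : Set Oct := {z | ∃ s t : ℝ, z = s • (1 : Oct) + t • I}

end Oct

open Oct

/-- The point `x + y I ∈ ℂ_Iⁿ ⊆ 𝕆ⁿ`. -/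
def aff {n : ℕ} (x y : Fin n → ℝ) (I : Oct) : Fin n → Oct :=
  fun m => x m • (1 : Oct) + y m • I

/-- The embedding `ℝⁿ ⊆ 𝕆ⁿ`. -/
def ofRealn {n : ℕ} (x : Fin n → ℝ) : Fin n → Oct := fun m => x m • (1 : Oct)

/-- The slice `ℂ_Iⁿ ⊆ 𝕆ⁿ`. -/
def slicen (n : ℕ) (I : Oct) : Set (Fin n → Oct) := {q | ∃ x y : Fin n → ℝ, q = aff x y I}

/-- The `n`-dimensional quadratic cone `𝕆ₛⁿ = ⋃_{I ∈ 𝕊} ℂ_Iⁿ`. -/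
def cone (n : ℕ) : Set (Fin n → Oct) := ⋃ I ∈ Sph, slicen n I

/-- The slice topology `τ_s`: a set is open iff its trace on every slice `ℂ_Iⁿ`
is open (expressed via the canonical parametrizations `(x,y) ↦ x + yI`). -/
def τs (n : ℕ) : TopologicalSpace (Fin n → Oct) :=
  ⨆ I : Sph, TopologicalSpace.coinduced
    (fun p : (Fin n → ℝ) × (Fin n → ℝ) => aff p.1 p.2 I.1) inferInstance

/-- A slice-open subset of the quadratic cone. -/
def SliceOpen (n : ℕ) (Ω : Set (Fin n → Oct)) : Prop :=
  Ω ⊆ cone n ∧ IsOpen[τs n] Ω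

/-- A slice-domain: a nonempty slice-connected slice-open subset of the cone. -/
def SliceDomain (n : ℕ) (Ω : Set (Fin n → Oct)) : Prop :=
  SliceOpen n Ω ∧ @IsConnected _ (τs n) Ω

/-- Real-connectedness: `Ω ∩ ℝⁿ` is a (pre)connected subset of `ℝⁿ`. -/
def RealConnected (n : ℕ) (Ω : Set (Fin n → Oct)) : Prop :=
  IsPreconnected {x : Fin n → ℝ | ofRealn x ∈ Ω}

/-- Axially symmetric subsets of the cone. -/
def AxSymm (n : ℕ) (Ω : Set (Fin n → Oct)) : Prop :=
  ∀ (x y : Fin n → ℝ), ∀ I ∈ Sph, ∀ J ∈ Sph, aff x y I ∈ Ω → aff x y J ∈ Ω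

/-- The upper half-space `ℝ²ⁿ₊`: pairs `(x,y)` with `y = 0` or the first
nonzero coordinate of `y` positive. -/
def pos2n (n : ℕ) : Set ((Fin n → ℝ) × (Fin n → ℝ)) :=
  {p | p.2 = 0 ∨ ∃ m : Fin n, 0 < p.2 m ∧ ∀ k : Fin n, k < m → p.2 k = 0}

/-- `Ω_{s₁}`. -/
def s1 {n : ℕ} (Ω : Set (Fin n → Oct)) : Set ((Fin n → ℝ) × (Fin n → ℝ)) :=
  {p | ∃ I ∈ Sph, aff p.1 p.2 I ∈ Ω}

/-- `Ω_{s₂}`. -/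
def s2 {n : ℕ} (Ω : Set (Fin n → Oct)) : Set ((Fin n → ℝ) × (Fin n → ℝ)) :=
  {p | ∃ J ∈ Sph, ∃ K ∈ Sph, J ≠ K ∧ aff p.1 p.2 J ∈ Ω ∧ aff p.1 p.2 K ∈ Ω}

/-- Slice functions: induced on `Ω_{s₂}⁺` by a pair `(F₁, F₂)` via
`f(x + yI) = F₁(x,y) + I·F₂(x,y)`. -/
def IsSliceFun (n : ℕ) (Ω : Set (Fin n → Oct)) (f : (Fin n → Oct) → Oct) : Prop :=
  ∃ F₁ F₂ : (Fin n → ℝ) × (Fin n → ℝ) → Oct,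
    ∀ x y : Fin n → ℝ, (x, y) ∈ s2 Ω ∩ pos2n n → ∀ I ∈ Sph, aff x y I ∈ Ω →
      f (aff x y I) = F₁ (x, y) + I * F₂ (x, y)

/-- Holomorphy of a function of `n` slice variables, read through the
parametrization `(x,y) ↦ x + yI`: continuous partial derivatives (i.e. `C¹`)
and the Cauchy–Riemann equations `(∂/∂xₘ + I ∂/∂yₘ) g = 0` on `U`. -/
def Holo (n : ℕ) (I : Oct) (g : (Fin n → ℝ) × (Fin n → ℝ) → Oct)
    (U : Set ((Fin n → ℝ) × (Fin n → ℝ))) : Prop :=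
  ContDiffOn ℝ 1 g U ∧
  ∀ p ∈ U, ∀ m : Fin n,
    fderiv ℝ g p (Pi.single m 1, 0) + I * fderiv ℝ g p (0, Pi.single m 1) = 0

/-- Weak slice regularity: each restriction `f|_{Ω ∩ ℂ_Iⁿ}` is holomorphic. -/
def WSliceReg (n : ℕ) (Ω : Set (Fin n → Oct)) (f : (Fin n → Oct) → Oct) : Prop :=
  ∀ I ∈ Sph, Holo n I (fun p => f (aff p.1 p.2 I)) {p | aff p.1 p.2 I ∈ Ω}

/-- The complex structure `σ(a,b) = (−b,a)` on `𝕆²`. -/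
def sigma2 : Oct × Oct → Oct × Oct := fun w => (-w.2, w.1)

/-- Holomorphic stem maps: `F : V → 𝕆²` extends to a `C¹` map `G` on an open
neighborhood `U ⊇ V` satisfying `(∂/∂xₘ + σ ∂/∂yₘ) G = 0` on `U`. -/
def StemHolo (n : ℕ) (V : Set ((Fin n → ℝ) × (Fin n → ℝ)))
    (F : (Fin n → ℝ) × (Fin n → ℝ) → Oct × Oct) : Prop :=
  ∃ (U : Set ((Fin n → ℝ) × (Fin n → ℝ))) (G : (Fin n → ℝ) × (Fin n → ℝ) → Oct × Oct),
    IsOpen U ∧ V ⊆ U ∧ Set.EqOn G F V ∧ ContDiffOn ℝ 1 G U ∧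
    ∀ p ∈ U, ∀ m : Fin n,
      fderiv ℝ G p (Pi.single m 1, 0) + sigma2 (fderiv ℝ G p (0, Pi.single m 1)) = 0

/-- Strong slice regularity: `f` is induced by a holomorphic stem map on `Ω_{s₁}`. -/
def SSliceReg (n : ℕ) (Ω : Set (Fin n → Oct)) (f : (Fin n → Oct) → Oct) : Prop :=
  ∃ F : (Fin n → ℝ) × (Fin n → ℝ) → Oct × Oct, StemHolo n (s1 Ω) F ∧
    ∀ x y : Fin n → ℝ, ∀ I ∈ Sph, aff x y I ∈ Ω →
      f (aff x y I) = (F (x, y)).1 + I * (F (x, y)).2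

/-- An s-basis `{I, J, K}` of the octonions. -/
def IsSBasis (I J K : Oct) : Prop :=
  I ∈ Sph ∧ J ∈ Sph ∧ K ∈ Sph ∧
  LinearIndependent ℝ ![(1 : Oct), I, J, I * J, K, J * K, I * K, (I * J) * K] ∧
  Submodule.span ℝ (Set.range ![(1 : Oct), I, J, I * J, K, J * K, I * K, (I * J) * K]) = ⊤

/-- Iterated left multiplication `L_w^β = (L_{w₁})^{β₁} ∘ ⋯ ∘ (L_{wₙ})^{βₙ}`. -/
def Lpow {n : ℕ} (w : Fin n → Oct) (β : Fin n → ℕ) : Oct → Oct :=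
  fun a => (List.finRange n).foldr (fun ℓ c => (fun o => w ℓ * o)^[β ℓ] c) a

/-- The `*`-power `(q − p)^{*α} a = ∑_{β ≤ α} C(α,β) L_q^β (L_{−p}^{α−β} a)`. -/
def starPow {n : ℕ} (p : Fin n → Oct) (α : Fin n → ℕ) (a : Oct) (q : Fin n → Oct) : Oct :=
  ∑ β ∈ Finset.Iic α, (∏ ℓ, (α ℓ).choose (β ℓ)) • Lpow q β (Lpow (-p) (α - β) a)

/-- The `ℓ`-th slice derivative `∂_ℓ f (x + w) = (∂/∂x_ℓ) f (x + w)`. -/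
def sderiv {n : ℕ} (ℓ : Fin n) (f : (Fin n → Oct) → Oct) : (Fin n → Oct) → Oct :=
  fun q => deriv (fun t : ℝ => f (fun m => q m + (if m = ℓ then t else 0) • (1 : Oct))) 0

/-- The iterated slice derivative `f^{(α)} = (∂₁)^{α₁} ⋯ (∂ₙ)^{αₙ} f`. -/
def sderivMulti {n : ℕ} (α : Fin n → ℕ) (f : (Fin n → Oct) → Oct) : (Fin n → Oct) → Oct :=
  (List.finRange n).foldr (fun ℓ g => (sderiv ℓ)^[α ℓ] g) f

/-- The slice-polydisc `P̃(q₀, r)` (relative to `I ∈ 𝕊` with `q₀ ∈ ℂ_Iⁿ`):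
points `x + yJ` with `x ± yI` in the closed polydisc `P_I(q₀, r)`. -/
def polyDisc {n : ℕ} (q₀ : Fin n → Oct) (I : Oct) (r : Fin n → ℝ) : Set (Fin n → Oct) :=
  {q | ∃ x y : Fin n → ℝ, ∃ J ∈ Sph, q = aff x y J ∧
        (∀ ℓ, ‖aff x y I ℓ - q₀ ℓ‖ ≤ r ℓ) ∧ (∀ ℓ, ‖aff x (-y) I ℓ - q₀ ℓ‖ ≤ r ℓ)}

/-! If `J ≠ ±I` are imaginary units, then `ℂ_Iⁿ ∩ ℂ_Jⁿ = ℝⁿ`: imaginary units have zero real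
part, and the only imaginary units on the line `ℝ I` are `±I`. So in the chart `(x, y) ↦ x + yJ`
of every slice, `ℂ_Iⁿ \ ℝⁿ` and the complement of `ℂ_Iⁿ` pull back to `{y ≠ 0}` or to `∅`, and both
sets are slice-open. A slice-connected `Ω` that misses `ℝⁿ` and meets `ℂ_Iⁿ` is covered by these two
disjoint slice-open sets, hence lies in the first. -/

lemma Quaternion.re_eq_zero_of_mul_self_eq_neg_one {a : ℍ} (h : a * a = -1) :
    a.re = 0 := by
  have hre := congrArg QuaternionAlgebra.re h
  have hi := congrArg QuaternionAlgebra.imI h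
  have hj := congrArg QuaternionAlgebra.imJ h
  have hk := congrArg QuaternionAlgebra.imK h
  simp only [Quaternion.re_mul, Quaternion.imI_mul, Quaternion.imJ_mul, Quaternion.imK_mul,
    Quaternion.re_neg, Quaternion.imI_neg, Quaternion.imJ_neg, Quaternion.imK_neg,
    Quaternion.re_one, Quaternion.imI_one, Quaternion.imJ_one, Quaternion.imK_one] at hre hi hj hk
  nlinarith [sq_nonneg a.re, sq_nonneg a.imI, sq_nonneg a.imJ, sq_nonneg a.imK]

namespace Oct

lemma ext {p q : Oct} (h₁ : c1 p = c1 q) (h₂ : c2 p = c2 q) : p = q := by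
  change mk (c1 p) (c2 p) = mk (c1 q) (c2 q)
  rw [h₁, h₂]

lemma smul_mul_smul (r s : ℝ) (p q : Oct) : (r • p) * (s • q) = (r * s) • (p * q) := by
  apply ext
  · change (r • c1 p) * (s • c1 q) - star (s • c2 q) * (r • c2 p)
      = (r * s) • (c1 p * c1 q - star (c2 q) * c2 p)
    simp only [Quaternion.star_smul, smul_mul_smul_comm, smul_sub, mul_comm s r]
  · change (s • c2 q) * (r • c1 p) + (r • c2 p) * star (s • c1 q)
      = (r * s) • (c2 q * c1 p + c2 p * star (c1 q))
    simp only [Quaternion.star_smul, smul_mul_smul_comm, smul_add, mul_comm s r]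

lemma one_ne_zero : (1 : Oct) ≠ 0 := fun h => _root_.one_ne_zero (congrArg c1 h)

lemma re_c1_eq_zero_of_mem_Sph {I : Oct} (hI : I ∈ Sph) : (c1 I).re = 0 := by
  have h₁ : c1 I * c1 I - star (c2 I) * c2 I = -1 := congrArg c1 hI
  have h₂ : c2 I * (c1 I + star (c1 I)) = 0 := by
    rw [mul_add]; exact (congrArg c2 hI).trans neg_zero
  rcases mul_eq_zero.mp h₂ with hb | ha
  · rw [hb, mul_zero, sub_zero] at h₁
    exact Quaternion.re_eq_zero_of_mul_self_eq_neg_one h₁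
  · rw [Quaternion.self_add_star', ← Quaternion.coe_zero, Quaternion.coe_inj] at ha
    linarith

lemma eq_one_or_eq_neg_one_of_smul_mem_Sph {I : Oct} (hI : I ∈ Sph) {r : ℝ} (h : r • I ∈ Sph) :
    r = 1 ∨ r = -1 := by
  have h' : (r * r) • (I * I) = -1 := by rw [← smul_mul_smul]; exact h
  rw [show I * I = -1 from hI] at h'
  have hr : (r * r - 1) • (-1 : Oct) = 0 := by rw [sub_smul, h', one_smul, sub_self]
  rcases smul_eq_zero.mp hr with hr | hr
  · exact mul_self_eq_one_iff.mp (sub_eq_zero.mp hr)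
  · exact absurd (neg_eq_zero.mp hr) Oct.one_ne_zero

lemma zero_notMem_Sph : (0 : Oct) ∉ Sph := fun h => by
  have := eq_one_or_eq_neg_one_of_smul_mem_Sph h (r := 0) (by rwa [zero_smul])
  norm_num at this

lemma eq_or_eq_neg_of_smul_eq_smul {I J : Oct} (hI : I ∈ Sph) (hJ : J ∈ Sph) {y t : ℝ}
    (hy : y ≠ 0) (h : y • J = t • I) : J = I ∨ J = -I := by
  have hJI : J = (t / y) • I := by
    rw [div_eq_inv_mul, mul_smul, ← h, smul_smul, inv_mul_cancel₀ hy, one_smul]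
  rcases eq_one_or_eq_neg_one_of_smul_mem_Sph hI (hJI ▸ hJ) with h | h
  · exact .inl (by rw [hJI, h, one_smul])
  · exact .inr (by rw [hJI, h, neg_one_smul])

lemma re_c1_smul_one (s : ℝ) : (c1 (s • 1)).re = s := by
  change s * 1 = s; ring

lemma re_c1_smul_one_add_smul {I : Oct} (hI : I ∈ Sph) (x y : ℝ) :
    (c1 (x • 1 + y • I)).re = x := by
  change x * 1 + y * (c1 I).re = x
  rw [re_c1_eq_zero_of_mem_Sph hI]; ring

lemma eq_or_eq_neg_of_smul_one_add_smul_eq {I J : Oct} (hI : I ∈ Sph) (hJ : J ∈ Sph)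
    {x y s t : ℝ} (hy : y ≠ 0) (h : x • (1 : Oct) + y • J = s • 1 + t • I) : J = I ∨ J = -I := by
  have hxs : x = s := by
    simpa only [re_c1_smul_one_add_smul hI, re_c1_smul_one_add_smul hJ]
      using congrArg (fun p => (c1 p).re) h
  subst hxs
  exact eq_or_eq_neg_of_smul_eq_smul hI hJ hy (add_left_cancel h)

lemma eq_zero_of_smul_one_add_smul_eq_smul_one {J : Oct} (hJ : J ∈ Sph) {x y s : ℝ}
    (h : x • (1 : Oct) + y • J = s • 1) : y = 0 := by
  have hxs : x = s := by
    simpa only [re_c1_smul_one_add_smul hJ, re_c1_smul_one] using congrArg (fun p => (c1 p).re) h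
  subst hxs
  rcases smul_eq_zero.mp (add_eq_left.mp h) with hy | hJ0
  · exact hy
  · exact absurd (hJ0 ▸ hJ) zero_notMem_Sph

end Oct

section Slices

variable {n : ℕ}

lemma aff_neg (x y : Fin n → ℝ) (I : Oct) : aff x y (-I) = aff x (-y) I := by
  funext m
  simp only [aff, Pi.neg_apply, smul_neg, neg_smul]

lemma aff_zero (x : Fin n → ℝ) (I : Oct) : aff x 0 I = ofRealn x := by
  funext m
  simp only [aff, ofRealn, Pi.zero_apply, zero_smul, add_zero]

def sliceChart (n : ℕ) (J : Oct) : (Fin n → ℝ) × (Fin n → ℝ) → (Fin n → Oct) :=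
  fun p => aff p.1 p.2 J

lemma isOpen_τs_iff {s : Set (Fin n → Oct)} :
    IsOpen[τs n] s ↔ ∀ J : Sph, IsOpen (sliceChart n J ⁻¹' s) := by
  rw [τs, isOpen_iSup_iff]
  rfl

lemma sliceChart_preimage_range_ofRealn {J : Oct} (hJ : J ∈ Sph) :
    sliceChart n J ⁻¹' Set.range ofRealn = {p | p.2 = 0} := by
  ext ⟨x, y⟩
  constructor
  · rintro ⟨z, hz⟩
    funext m
    exact eq_zero_of_smul_one_add_smul_eq_smul_one hJ (congrFun hz m).symm
  · rintro (rfl : y = 0)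
    exact ⟨x, (aff_zero x J).symm⟩

lemma sliceChart_preimage_slicen_of_eq_or_eq_neg {I J : Oct} (hJI : J = I ∨ J = -I) :
    sliceChart n J ⁻¹' slicen n I = Set.univ := by
  refine Set.eq_univ_of_forall fun ⟨x, y⟩ => ?_
  rcases hJI with rfl | rfl
  · exact ⟨x, y, rfl⟩
  · exact ⟨x, -y, aff_neg x y I⟩

lemma sliceChart_preimage_slicen_of_not_eq_or_eq_neg {I J : Oct} (hI : I ∈ Sph) (hJ : J ∈ Sph)
    (hJI : ¬(J = I ∨ J = -I)) : sliceChart n J ⁻¹' slicen n I = {p | p.2 = 0} := by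
  ext ⟨x, y⟩
  constructor
  · rintro ⟨x', y', h⟩
    funext m
    by_contra hy
    exact hJI (eq_or_eq_neg_of_smul_one_add_smul_eq hI hJ hy (congrFun h m))
  · rintro (rfl : y = 0)
    exact ⟨x, 0, by simp only [sliceChart, aff_zero]⟩

lemma isClosed_snd_eq_zero : IsClosed {p : (Fin n → ℝ) × (Fin n → ℝ) | p.2 = 0} :=
  isClosed_eq continuous_snd continuous_const

lemma isOpen_slicen_diff_range_ofRealn {I : Oct} (hI : I ∈ Sph) :
    IsOpen[τs n] (slicen n I \ Set.range ofRealn) := by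
  refine isOpen_τs_iff.mpr fun ⟨J, hJ⟩ => ?_
  rw [Set.preimage_sdiff, sliceChart_preimage_range_ofRealn hJ]
  by_cases hJI : J = I ∨ J = -I
  · rw [sliceChart_preimage_slicen_of_eq_or_eq_neg hJI, ← Set.compl_eq_univ_sdiff]
    exact isClosed_snd_eq_zero.isOpen_compl
  · rw [sliceChart_preimage_slicen_of_not_eq_or_eq_neg hI hJ hJI, Set.sdiff_self]
    exact isOpen_empty

lemma isOpen_compl_slicen {I : Oct} (hI : I ∈ Sph) : IsOpen[τs n] (slicen n I)ᶜ := by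
  refine isOpen_τs_iff.mpr fun ⟨J, hJ⟩ => ?_
  rw [Set.preimage_compl]
  by_cases hJI : J = I ∨ J = -I
  · rw [sliceChart_preimage_slicen_of_eq_or_eq_neg hJI, Set.compl_univ]
    exact isOpen_empty
  · rw [sliceChart_preimage_slicen_of_not_eq_or_eq_neg hI hJ hJI]
    exact isClosed_snd_eq_zero.isOpen_compl

end Slices

theorem sliceDomain_subset_slice_of_real_empty_general (n : ℕ)
    (Ω : Set (Fin n → Oct)) (hΩ : SliceDomain n Ω)
    (hR : {x : Fin n → ℝ | ofRealn x ∈ Ω} = ∅) :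
    ∃ I ∈ Sph, Ω ⊆ slicen n I := by
  obtain ⟨⟨hcone, -⟩, ⟨q₀, hq₀⟩, hconn⟩ := hΩ
  obtain ⟨I, hI, hq₀I⟩ : ∃ I ∈ Sph, q₀ ∈ slicen n I := by
    simpa only [cone, Set.mem_iUnion₂, exists_prop] using hcone hq₀
  have hΩ_real : ∀ q ∈ Ω, q ∉ Set.range ofRealn := by
    rintro _ hq ⟨x, rfl⟩
    exact Set.eq_empty_iff_forall_notMem.mp hR x hq
  have hΩ_cover : Ω ⊆ (slicen n I \ Set.range ofRealn) ∪ (slicen n I)ᶜ := fun q hq =>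
    (em (q ∈ slicen n I)).imp (fun hqI => ⟨hqI, hΩ_real q hq⟩) id
  have hΩI : Ω ⊆ slicen n I \ Set.range ofRealn :=
    @IsPreconnected.subset_left_of_subset_union _ (τs n) _ _ _
      (isOpen_slicen_diff_range_ofRealn hI) (isOpen_compl_slicen hI)
      (disjoint_compl_right.mono_left Set.sdiff_subset) hΩ_cover
      ⟨q₀, hq₀, hq₀I, hΩ_real q₀ hq₀⟩ hconn
  exact ⟨I, hI, hΩI.trans Set.sdiff_subset⟩

/-- A real-connected slice-domain missing `ℝⁿ` is contained in
a single slice `ℂ_Iⁿ`. -/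
theorem sliceDomain_subset_slice_of_real_empty (n : ℕ) (hn : 1 ≤ n)
    (Ω : Set (Fin n → Oct)) (hΩ : SliceDomain n Ω) (hrc : RealConnected n Ω)
    (hR : {x : Fin n → ℝ | ofRealn x ∈ Ω} = ∅) :
    ∃ I ∈ Sph, Ω ⊆ slicen n I :=
  sliceDomain_subset_slice_of_real_empty_general n Ω hΩ hR

end
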